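/- arXiv:2101.07838 — 2 statements merged into one kernel-verified Lean document; each statement's English description precedes it below -/
import Mathlib

section
/- Let G be a finite group with no non-identity normal abelian subgroup, and let H be a CD-subgroup of G. Then H ∩ C_G(H) = 1, H is normal in G, and G = H × C_G(H) (internal direct product: H·C_G(H) = G and H ∩ C_G(H) = 1 with both factors normal). -/
open Pointwise

/-- The Chermak–Delgado index-measure of a subgroup `H` of `G`:
`m(G,H) = |G:H| * |G:C_G(H)|`. -/
noncomputable def cdMeasure {G : Type*} [Group G] (H : Subgroup G) : ℕ :=
  H.index * (Subgroup.centralizer (H : Set G)).index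

/-- `μ(G)`, the minimum of `m(G,H)` over all subgroups `H ≤ G`. -/
noncomputable def cdMu (G : Type*) [Group G] : ℕ :=
  sInf {n : ℕ | ∃ H : Subgroup G, cdMeasure H = n}

/-- A subgroup `H ≤ G` is a CD-subgroup if `m(G,H) = μ(G)`. -/
def IsCDSubgroup {G : Type*} [Group G] (H : Subgroup G) : Prop :=
  cdMeasure H = cdMu G

/-!
Call `H ≤ G` a CD-maximizer if it maximizes `|H| |C_G(H)|`; as `|G:H| |G:C_G(H)|` is `|G|²`
divided by this, these are exactly the CD-subgroups. By the product formula
`|XY| |X ∩ Y| = |X| |Y|`, the maximizers form a lattice closed under `C_G`, in which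
`X ⊔ Y = XY`. Its least member is normal and abelian, hence trivial here, so every maximizer
satisfies `|H| |C_G(H)| = |G|`. Everything then reduces to showing that an abelian maximizer `W`
is trivial: applied to `Z(H) = H ∩ C_G(H)` this gives `G = H C_G(H)` with `H ∩ C_G(H) = 1`,
and `H` is normalized by `H C_G(H) = G`.

For this, induct on `|G|` and take `W ≠ 1` of least order. If `W` lies in a proper normal
maximizer `N`, then `G = N × C_G(N)`, so `W` is a maximizer of `N`, which again has no abelian
normal subgroups. Otherwise let `W^g ≠ W`. Minimality gives `W ∩ W^g = 1`, so `P = W W^g` has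
order `|W|²`. If `Z(P) = 1` then `P` is normal, so `P = G = W^g W`, which forces `W^g = W`.
So `|Z(P)| ≥ |W|`, and either `W ≤ Z(P)`, or `Z(P) ∩ W = 1` and `P = Z(P) W` is abelian. In
both cases `W^g` centralizes `W`, so the normal closure of `W` is abelian, hence trivial.
-/

namespace Subgroup

variable {G : Type*} [Group G]

theorem card_mul_card_inf (X Y : Subgroup G) :
    Nat.card ((X : Set G) * (Y : Set G) : Set G) * Nat.card (X ⊓ Y : Subgroup G) =
      Nat.card X * Nat.card Y := by
  have smul_mk_one (x : X) : x • ((1 : G) : G ⧸ Y) = ((x : G) : G ⧸ Y) := by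
    change (x : G) • ((1 : G) : G ⧸ Y) = _
    rw [MulAction.Quotient.smul_coe, smul_eq_mul, mul_one]
  have hstab : MulAction.stabilizer X ((1 : G) : G ⧸ Y) = Y.subgroupOf X := by
    ext x
    simp [smul_mk_one, QuotientGroup.eq, mem_subgroupOf]
  have horbit : MulAction.orbit X ((1 : G) : G ⧸ Y) = (X : Set G).image (↑) := by
    ext q
    simp [MulAction.mem_orbit_iff, smul_mk_one]
  rw [card_mul_eq_card_subgroup_mul_card_quotient, Nat.card_coe_set_eq, ← horbit,
    ← MulAction.index_stabilizer, hstab, ← (Y.subgroupOf X).card_mul_index,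
    ← Nat.card_congr (subgroupOfEquivOfLe (inf_le_left : X ⊓ Y ≤ X)).toEquiv,
    inf_subgroupOf_left]
  ring

theorem card_mul_of_inf_eq_bot {X Y : Subgroup G} (h : X ⊓ Y = ⊥) :
    Nat.card ((X : Set G) * (Y : Set G) : Set G) = Nat.card X * Nat.card Y := by
  simpa [h] using card_mul_card_inf X Y

theorem card_subgroupOf (H K : Subgroup G) :
    Nat.card (H.subgroupOf K) = Nat.card (H ⊓ K : Subgroup G) := by
  rw [← subgroupOf_map_subtype, card_map_of_injective K.subtype_injective]

theorem card_pointwise_smul (a : MulAut G) (H : Subgroup G) :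
    Nat.card (a • H : Subgroup G) = Nat.card H := by
  rw [← SetLike.coe_sort_coe, coe_pointwise_smul, Nat.card_coe_set_eq, Set.ncard_smul_set,
    ← Nat.card_coe_set_eq, SetLike.coe_sort_coe]

theorem centralizer_pointwise_smul (a : MulAut G) (H : Subgroup G) :
    centralizer ((a • H : Subgroup G) : Set G) = a • centralizer (H : Set G) := by
  ext x
  simp only [mem_centralizer_iff, coe_pointwise_smul, Set.mem_smul_set, forall_exists_index,
    and_imp, forall_apply_eq_imp_iff₂, mem_pointwise_smul_iff_inv_smul_mem, SetLike.mem_coe]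
  refine forall₂_congr fun k _ => ?_
  rw [← (a⁻¹).injective.eq_iff]
  simp [MulAut.smul_def]

theorem centralizer_sup (X Y : Subgroup G) :
    centralizer ((X ⊔ Y : Subgroup G) : Set G) =
      centralizer (X : Set G) ⊓ centralizer (Y : Set G) := by
  rw [← closure_eq X, ← closure_eq Y, ← closure_union, centralizer_closure, closure_eq,
    closure_eq]
  ext
  simp [mem_centralizer_iff, or_imp, forall_and]

theorem sup_le_centralizer_sup {X Y : Subgroup G} (hX : X ≤ centralizer (X : Set G))
    (hY : Y ≤ centralizer (Y : Set G)) (hXY : X ≤ centralizer (Y : Set G)) :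
    X ⊔ Y ≤ centralizer ((X ⊔ Y : Subgroup G) : Set G) := by
  rw [centralizer_sup]
  exact sup_le (le_inf hX hXY) (le_inf (le_centralizer_iff.mp hXY) hY)

theorem isMulCommutative_of_le {X W : Subgroup G} (h : X ≤ W) [IsMulCommutative W] :
    IsMulCommutative X :=
  le_centralizer_iff_isMulCommutative.mp <|
    h.trans <| (le_centralizer_iff_isMulCommutative.mpr ‹_›).trans (centralizer_le h)

instance isMulCommutative_inf_centralizer (H : Subgroup G) :
    IsMulCommutative (H ⊓ centralizer (H : Set G) : Subgroup G) :=
  le_centralizer_iff_isMulCommutative.mp <|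
    le_centralizer_iff.mp (inf_le_right.trans (centralizer_le inf_le_left))

theorem isMulCommutative_normalClosure {W : Subgroup G}
    (h : ∀ g : G, MulAut.conj g • W ≤ centralizer (W : Set G)) :
    IsMulCommutative (normalClosure (W : Set G)) := by
  have hW : W ≤ centralizer (normalClosure (W : Set G) : Set G) := by
    rw [normalClosure, centralizer_closure]
    intro x hx
    rw [mem_centralizer_iff]
    intro y hy
    obtain ⟨w, hw, hconj⟩ := Group.mem_conjugatesOfSet_iff.mp hy
    obtain ⟨c, rfl⟩ := isConj_iff.mp hconj
    have hmem : c * w * c⁻¹ ∈ MulAut.conj c • W :=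
      smul_mem_pointwise_smul w (MulAut.conj c) W hw
    exact (mem_centralizer_iff.mp (h c hmem) x hx).symm
  exact le_centralizer_iff_isMulCommutative.mp (normalClosure_le_normal hW)

theorem normal_of_mul_eq_univ {H A B : Subgroup G} (hA : A ≤ normalizer (H : Set G))
    (hB : B ≤ normalizer (H : Set G)) (hAB : (A : Set G) * (B : Set G) = Set.univ) :
    H.Normal := by
  rw [← normalizer_eq_top_iff, ← coe_eq_univ, ← Set.univ_subset_iff, ← hAB]
  exact mul_subset hA hB

theorem normal_of_mul_centralizer_eq_univ {H : Subgroup G}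
    (h : (H : Set G) * (centralizer (H : Set G) : Set G) = Set.univ) : H.Normal :=
  normal_of_mul_eq_univ le_normalizer (centralizer_le_normalizer _) h

theorem conj_smul_eq_self_of_mem_conj_smul_mul {H : Subgroup G} {g : G}
    (hg : g ∈ ((MulAut.conj g • H : Subgroup G) : Set G) * H) : MulAut.conj g • H = H := by
  obtain ⟨v, hv, w, hw, rfl⟩ := hg
  have hvw : MulAut.conj (v * w) • H = MulAut.conj v • H := by
    rw [map_mul, mul_smul, conj_smul_eq_self_of_mem hw]
  rw [hvw] at hv ⊢
  have hv' := mem_pointwise_smul_iff_inv_smul_mem.mp hv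
  rw [MulAut.smul_def, ← map_inv, MulAut.conj_apply, inv_inv, inv_mul_cancel, one_mul] at hv'
  exact conj_smul_eq_self_of_mem hv'

theorem centralizer_subgroupOf {K N : Subgroup G} (hK : K ≤ N) :
    centralizer ((K.subgroupOf N : Subgroup N) : Set N) =
      (centralizer (K : Set G)).subgroupOf N := by
  ext n
  simp only [mem_subgroupOf, mem_centralizer_iff, SetLike.mem_coe, Subtype.forall,
    Subtype.ext_iff, coe_mul]
  exact ⟨fun h k hk => h k (hK hk) hk, fun h k _ hk => h k hk⟩

end Subgroup

open Subgroup

section ChermakDelgado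

variable {G : Type*} [Group G]

noncomputable def cdCard (H : Subgroup G) : ℕ :=
  Nat.card H * Nat.card (centralizer (H : Set G))

def IsCDMax (H : Subgroup G) : Prop :=
  ∀ K : Subgroup G, cdCard K ≤ cdCard H

theorem cdMeasure_mul_cdCard (H : Subgroup G) : cdMeasure H * cdCard H = Nat.card G ^ 2 :=
  calc cdMeasure H * cdCard H
      = (Nat.card H * H.index) *
          (Nat.card (centralizer (H : Set G)) * (centralizer (H : Set G)).index) := by
        rw [cdMeasure, cdCard]; ring
    _ = Nat.card G ^ 2 := by rw [card_mul_index, card_mul_index, sq]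

theorem IsCDSubgroup.isCDMax [Finite G] {H : Subgroup G} (hH : IsCDSubgroup H) : IsCDMax H := by
  intro K
  have hle : cdMeasure H ≤ cdMeasure K := hH ▸ Nat.sInf_le ⟨K, rfl⟩
  have hpos : 0 < cdMeasure H :=
    Nat.mul_pos (Nat.pos_of_ne_zero H.index_ne_zero_of_finite)
      (Nat.pos_of_ne_zero (centralizer (H : Set G)).index_ne_zero_of_finite)
  refine Nat.le_of_mul_le_mul_left ?_ hpos
  calc cdMeasure H * cdCard K ≤ cdMeasure K * cdCard K := Nat.mul_le_mul_right _ hle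
    _ = cdMeasure H * cdCard H := by rw [cdMeasure_mul_cdCard, cdMeasure_mul_cdCard]

theorem cdCard_pointwise_smul (a : MulAut G) (H : Subgroup G) : cdCard (a • H) = cdCard H := by
  rw [cdCard, cdCard, centralizer_pointwise_smul, card_pointwise_smul, card_pointwise_smul]

theorem IsCDMax.pointwise_smul {H : Subgroup G} (hH : IsCDMax H) (a : MulAut G) :
    IsCDMax (a • H) := by
  intro K
  rw [cdCard_pointwise_smul]
  exact hH K

variable [Finite G]

theorem cdCard_pos (H : Subgroup G) : 0 < cdCard H := Nat.mul_pos Nat.card_pos Nat.card_pos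

theorem centralizer_centralizer_of_isCDMax {H : Subgroup G} (hH : IsCDMax H) :
    centralizer (centralizer (H : Set G) : Set G) = H := by
  have hle : H ≤ centralizer (centralizer (H : Set G) : Set G) := le_centralizer_iff.mp le_rfl
  refine (eq_of_le_of_card_ge hle ?_).symm
  refine Nat.le_of_mul_le_mul_right ?_ (Nat.card_pos (α := centralizer (H : Set G)))
  rw [mul_comm]
  exact hH _

theorem isCDMax_centralizer {H : Subgroup G} (hH : IsCDMax H) :
    IsCDMax (centralizer (H : Set G)) := by
  intro K
  calc cdCard K ≤ cdCard H := hH K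
    _ = cdCard (centralizer (H : Set G)) := by
      rw [cdCard, cdCard, centralizer_centralizer_of_isCDMax hH, mul_comm]

theorem cdCard_mul_cdCard_mul_card_sup_le (X Y : Subgroup G) :
    cdCard X * cdCard Y * Nat.card (X ⊔ Y : Subgroup G) ≤
      cdCard (X ⊓ Y) * cdCard (X ⊔ Y) * Nat.card ((X : Set G) * (Y : Set G) : Set G) := by
  have hprod := card_mul_card_inf X Y
  have hcprod := card_mul_card_inf (centralizer (X : Set G)) (centralizer (Y : Set G))
  rw [← centralizer_sup] at hcprod
  have hq : Nat.card ((centralizer (X : Set G) : Set G) * (centralizer (Y : Set G) : Set G) : Set G)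
      ≤ Nat.card (centralizer ((X ⊓ Y : Subgroup G) : Set G)) :=
    Nat.card_mono (Set.toFinite _)
      (mul_subset (centralizer_le inf_le_left) (centralizer_le inf_le_right))
  calc cdCard X * cdCard Y * Nat.card (X ⊔ Y : Subgroup G)
      = (Nat.card X * Nat.card Y) *
          (Nat.card (centralizer (X : Set G)) * Nat.card (centralizer (Y : Set G))) *
          Nat.card (X ⊔ Y : Subgroup G) := by simp only [cdCard]; ring
    _ = _ := by rw [← hprod, ← hcprod]
    _ ≤ Nat.card ((X : Set G) * (Y : Set G) : Set G) * Nat.card (X ⊓ Y : Subgroup G) *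
          (Nat.card (centralizer ((X ⊓ Y : Subgroup G) : Set G)) *
            Nat.card (centralizer ((X ⊔ Y : Subgroup G) : Set G))) *
          Nat.card (X ⊔ Y : Subgroup G) := by gcongr
    _ = _ := by simp only [cdCard]; ring

private theorem eq_and_eq_of_le_of_le_of_mul_le {x y m : ℕ} (hx : x ≤ m) (hy : y ≤ m)
    (h : m * m ≤ x * y) : x = m ∧ y = m := by
  constructor <;> nlinarith

theorem isCDMax_inf_and_sup {X Y : Subgroup G} (hX : IsCDMax X) (hY : IsCDMax Y) :
    IsCDMax (X ⊓ Y) ∧ IsCDMax (X ⊔ Y) ∧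
      ((X ⊔ Y : Subgroup G) : Set G) = (X : Set G) * (Y : Set G) := by
  have hsub : (X : Set G) * (Y : Set G) ⊆ (X ⊔ Y : Subgroup G) :=
    mul_subset (le_sup_left : X ≤ X ⊔ Y) (le_sup_right : Y ≤ X ⊔ Y)
  have hp : Nat.card ((X : Set G) * (Y : Set G) : Set G) ≤ Nat.card (X ⊔ Y : Subgroup G) :=
    Nat.card_mono (Set.toFinite _) hsub
  have hbound := cdCard_mul_cdCard_mul_card_sup_le X Y
  rw [le_antisymm (hX Y) (hY X)] at hbound
  have hsq : cdCard X * cdCard X ≤ cdCard (X ⊓ Y) * cdCard (X ⊔ Y) :=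
    Nat.le_of_mul_le_mul_right (hbound.trans (Nat.mul_le_mul_left _ hp)) Nat.card_pos
  obtain ⟨hinf, hsup⟩ := eq_and_eq_of_le_of_le_of_mul_le (hX _) (hX _) hsq
  refine ⟨fun K => hinf ▸ hX K, fun K => hsup ▸ hX K, ?_⟩
  rw [hinf, hsup] at hbound
  refine (Set.eq_of_subset_of_ncard_le hsub ?_ (Set.toFinite _)).symm
  rw [← Nat.card_coe_set_eq, ← Nat.card_coe_set_eq]
  exact Nat.le_of_mul_le_mul_left hbound (Nat.mul_pos (cdCard_pos X) (cdCard_pos X))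

theorem isCDMax_inf {X Y : Subgroup G} (hX : IsCDMax X) (hY : IsCDMax Y) : IsCDMax (X ⊓ Y) :=
  (isCDMax_inf_and_sup hX hY).1

theorem isCDMax_sup {X Y : Subgroup G} (hX : IsCDMax X) (hY : IsCDMax Y) : IsCDMax (X ⊔ Y) :=
  (isCDMax_inf_and_sup hX hY).2.1

theorem coe_sup_of_isCDMax {X Y : Subgroup G} (hX : IsCDMax X) (hY : IsCDMax Y) :
    ((X ⊔ Y : Subgroup G) : Set G) = (X : Set G) * (Y : Set G) :=
  (isCDMax_inf_and_sup hX hY).2.2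

theorem card_sup_of_isCDMax_of_inf_eq_bot {X Y : Subgroup G} (hX : IsCDMax X) (hY : IsCDMax Y)
    (h : X ⊓ Y = ⊥) : Nat.card (X ⊔ Y : Subgroup G) = Nat.card X * Nat.card Y := by
  rw [← card_mul_of_inf_eq_bot h, ← coe_sup_of_isCDMax hX hY]
  rfl

theorem isCDMax_inf_centralizer {H : Subgroup G} (hH : IsCDMax H) :
    IsCDMax (H ⊓ centralizer (H : Set G)) :=
  isCDMax_inf hH (isCDMax_centralizer hH)

theorem exists_isCDMax : ∃ H : Subgroup G, IsCDMax H :=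
  Finite.exists_max cdCard

theorem exists_isCDMax_normal_isMulCommutative :
    ∃ M : Subgroup G, IsCDMax M ∧ M.Normal ∧ IsMulCommutative M := by
  obtain ⟨H, hH⟩ := exists_isCDMax (G := G)
  obtain ⟨M, hM, hmin⟩ := Set.exists_min_image {X : Subgroup G | IsCDMax X} (Nat.card ·)
    (Set.toFinite _) ⟨H, hH⟩
  have hle : ∀ X, IsCDMax X → M ≤ X := fun X hX =>
    (eq_of_le_of_card_ge inf_le_left (hmin _ (isCDMax_inf hM hX))).ge.trans inf_le_right
  refine ⟨M, hM, Normal.of_conjugate_fixed fun g => ?_, ?_⟩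
  · exact (eq_of_le_of_card_ge (hle _ (hM.pointwise_smul _))
      (card_pointwise_smul _ M).le).symm
  · exact le_centralizer_iff_isMulCommutative.mp (hle _ (isCDMax_centralizer hM))

end ChermakDelgado

def NoAbelianNormal (G : Type*) [Group G] : Prop :=
  ∀ N : Subgroup G, N.Normal → IsMulCommutative N → N = ⊥

section NoAbelianNormal

variable {G : Type*} [Group G]

theorem inf_centralizer_eq_bot_of_normal (hG : NoAbelianNormal G) {N : Subgroup G}
    (hN : N.Normal) : N ⊓ centralizer (N : Set G) = ⊥ :=
  hG _ inferInstance inferInstance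

variable [Finite G]

theorem isCDMax_bot (hG : NoAbelianNormal G) : IsCDMax (⊥ : Subgroup G) := by
  obtain ⟨M, hM, hMn, hMc⟩ := exists_isCDMax_normal_isMulCommutative (G := G)
  exact hG M hMn hMc ▸ hM

theorem cdCard_eq_card_of_isCDMax (hG : NoAbelianNormal G) {H : Subgroup G} (hH : IsCDMax H) :
    cdCard H = Nat.card G := by
  have hbot : cdCard (⊥ : Subgroup G) = Nat.card G := by
    simp [cdCard, centralizer_eq_top_iff_subset]
  rw [← hbot]
  exact le_antisymm (isCDMax_bot hG H) (hH ⊥)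

theorem mul_centralizer_eq_univ (hG : NoAbelianNormal G) {H : Subgroup G} (hH : IsCDMax H)
    (h : H ⊓ centralizer (H : Set G) = ⊥) :
    (H : Set G) * (centralizer (H : Set G) : Set G) = Set.univ := by
  refine Set.eq_of_subset_of_ncard_le (Set.subset_univ _) ?_ (Set.toFinite _)
  rw [Set.ncard_univ, ← Nat.card_coe_set_eq, card_mul_of_inf_eq_bot h]
  exact (cdCard_eq_card_of_isCDMax hG hH).ge

theorem normal_of_isCDMax_of_inf_centralizer_eq_bot (hG : NoAbelianNormal G) {H : Subgroup G}
    (hH : IsCDMax H) (h : H ⊓ centralizer (H : Set G) = ⊥) : H.Normal :=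
  normal_of_mul_centralizer_eq_univ (mul_centralizer_eq_univ hG hH h)

end NoAbelianNormal

section DirectFactor

variable {G : Type*} [Group G] {N : Subgroup G}

theorem card_centralizer_of_le (hbot : N ⊓ centralizer (N : Set G) = ⊥)
    (huniv : (N : Set G) * (centralizer (N : Set G) : Set G) = Set.univ) {K : Subgroup G}
    (hK : K ≤ N) :
    Nat.card (centralizer (K : Set G)) =
      Nat.card (centralizer (K : Set G) ⊓ N : Subgroup G) *
        Nat.card (centralizer (N : Set G)) := by
  have hdisj : centralizer (K : Set G) ⊓ N ⊓ centralizer (N : Set G) = ⊥ :=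
    le_bot_iff.mp (hbot ▸ inf_le_inf_right _ inf_le_right)
  rw [← card_mul_of_inf_eq_bot hdisj, inf_mul_assoc _ _ _ (centralizer_le hK), huniv,
    Set.inter_univ]
  rfl

theorem cdCard_subgroupOf_mul_card_centralizer (hbot : N ⊓ centralizer (N : Set G) = ⊥)
    (huniv : (N : Set G) * (centralizer (N : Set G) : Set G) = Set.univ) {K : Subgroup G}
    (hK : K ≤ N) :
    cdCard (K.subgroupOf N) * Nat.card (centralizer (N : Set G)) = cdCard K := by
  rw [cdCard, cdCard, centralizer_subgroupOf hK, card_subgroupOf, card_subgroupOf,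
    inf_eq_left.mpr hK, card_centralizer_of_le hbot huniv hK, mul_assoc]

theorem noAbelianNormal_of_mul_centralizer_eq_univ (hG : NoAbelianNormal G)
    (huniv : (N : Set G) * (centralizer (N : Set G) : Set G) = Set.univ) :
    NoAbelianNormal N := by
  intro B hB hBc
  have hBN : B.map N.subtype ≤ N := map_subtype_le B
  have : ((B.map N.subtype).subgroupOf N).Normal := by
    rwa [subgroupOf, comap_map_eq_self_of_injective N.subtype_injective]
  have hnormal : (B.map N.subtype).Normal :=
    normal_of_mul_eq_univ (le_normalizer_of_normal_subgroupOf hBN)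
      ((centralizer_le hBN).trans (centralizer_le_normalizer _)) huniv
  exact (map_eq_bot_iff_of_injective B N.subtype_injective).mp (hG _ hnormal inferInstance)

theorem IsCDMax.subgroupOf [Finite G] (hbot : N ⊓ centralizer (N : Set G) = ⊥)
    (huniv : (N : Set G) * (centralizer (N : Set G) : Set G) = Set.univ) {W : Subgroup G}
    (hW : IsCDMax W) (hWN : W ≤ N) : IsCDMax (W.subgroupOf N) := by
  intro K
  have hK : K = (K.map N.subtype).subgroupOf N :=
    (comap_map_eq_self_of_injective N.subtype_injective K).symm
  refine Nat.le_of_mul_le_mul_right ?_ (Nat.card_pos (α := centralizer (N : Set G)))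
  rw [hK, cdCard_subgroupOf_mul_card_centralizer hbot huniv (map_subtype_le K),
    cdCard_subgroupOf_mul_card_centralizer hbot huniv hWN]
  exact hW _

end DirectFactor

theorem conj_smul_le_centralizer_of_minimal {G : Type*} [Group G] [Finite G]
    (hG : NoAbelianNormal G) {W : Subgroup G}
    (hW : IsCDMax W) [IsMulCommutative W]
    (hmin : ∀ X : Subgroup G, IsCDMax X → IsMulCommutative X → X ≠ ⊥ →
      Nat.card W ≤ Nat.card X)
    (htop : ∀ P : Subgroup G, P.Normal → IsCDMax P → W ≤ P → P = ⊤) (g : G) :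
    MulAut.conj g • W ≤ centralizer (W : Set G) := by
  have hsub : ∀ X ≤ W, IsCDMax X → X = ⊥ ∨ X = W := fun X hXW hX =>
    (em (X = ⊥)).imp_right fun hX0 =>
      eq_of_le_of_card_ge hXW (hmin X hX (isMulCommutative_of_le hXW) hX0)
  set W' := MulAut.conj g • W
  have hW' : IsCDMax W' := hW.pointwise_smul _
  by_cases heq : W' = W
  · rw [heq]
    exact le_centralizer_iff_isMulCommutative.mpr ‹_›
  have hdisj : W ⊓ W' = ⊥ := (hsub _ inf_le_left (isCDMax_inf hW hW')).resolve_right fun h =>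
    heq (eq_of_le_of_card_ge (inf_eq_left.mp h) (card_pointwise_smul _ W).le).symm
  set P := W ⊔ W'
  have hP : IsCDMax P := isCDMax_sup hW hW'
  set Z := P ⊓ centralizer (P : Set G)
  have hZ : IsCDMax Z := isCDMax_inf_centralizer hP
  have hZ0 : Z ≠ ⊥ := fun hZ0 => by
    have hPtop := htop P (normal_of_isCDMax_of_inf_centralizer_eq_bot hG hP hZ0) hP le_sup_left
    refine heq (conj_smul_eq_self_of_mem_conj_smul_mul ?_)
    rw [← coe_sup_of_isCDMax hW' hW, sup_comm]
    change g ∈ (P : Set G)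
    rw [hPtop, coe_top]
    trivial
  rcases hsub _ inf_le_right (isCDMax_inf hZ hW) with hZW | hZW
  · -- `|Z ⊔ W| = |Z| |W| ≥ |W|² = |P|`, so `P = Z ⊔ W`, abelian as `Z` is central in `P`.
    have hZWP : Z ⊔ W = P := by
      refine eq_of_le_of_card_ge (sup_le inf_le_left le_sup_left) ?_
      rw [card_sup_of_isCDMax_of_inf_eq_bot hW hW' hdisj, card_pointwise_smul,
        card_sup_of_isCDMax_of_inf_eq_bot hZ hW hZW]
      exact Nat.mul_le_mul_right _ (hmin Z hZ inferInstance hZ0)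
    have hPc : P ≤ centralizer (P : Set G) := hZWP ▸ sup_le_centralizer_sup
      (le_centralizer_iff_isMulCommutative.mpr inferInstance)
      (le_centralizer_iff_isMulCommutative.mpr ‹_›)
      (inf_le_right.trans (centralizer_le (le_sup_left : W ≤ P)))
    exact (le_sup_right.trans hPc).trans (centralizer_le (le_sup_left : W ≤ P))
  · have hWZ : W ≤ Z := inf_eq_right.mp hZW
    exact le_centralizer_iff.mp
      (hWZ.trans (inf_le_right.trans (centralizer_le (le_sup_right : W' ≤ P))))

theorem eq_bot_of_isCDMax_of_isMulCommutative {G : Type*} [Group G] [Finite G]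
    (hG : NoAbelianNormal G) {W₀ : Subgroup G} (hW₀ : IsCDMax W₀) [IsMulCommutative W₀] :
    W₀ = ⊥ := by
  induction hn : Nat.card G using Nat.strong_induction_on generalizing G with
  | _ n ih =>
  by_contra hne
  obtain ⟨W, ⟨hW, hWc, hW0⟩, hmin⟩ :=
    Set.exists_min_image {X : Subgroup G | IsCDMax X ∧ IsMulCommutative X ∧ X ≠ ⊥}
      (Nat.card ·) (Set.toFinite _) ⟨W₀, hW₀, inferInstance, hne⟩
  apply hW0
  by_cases hN : ∃ N : Subgroup G, N.Normal ∧ IsCDMax N ∧ W ≤ N ∧ N ≠ ⊤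
  · obtain ⟨N, hNn, hNmax, hWN, hNtop⟩ := hN
    have hbot := inf_centralizer_eq_bot_of_normal hG hNn
    have huniv := mul_centralizer_eq_univ hG hNmax hbot
    have hlt : Nat.card N < n :=
      hn ▸ (card_le_card_group N).lt_of_ne (mt (card_eq_iff_eq_top N).mp hNtop)
    have hWN0 : W.subgroupOf N = ⊥ :=
      ih _ hlt (noAbelianNormal_of_mul_centralizer_eq_univ hG huniv)
        (hW.subgroupOf hbot huniv hWN) rfl
    exact (subgroupOf_eq_bot.mp hWN0).eq_bot_of_le hWN
  · push Not at hN
    have hconj := conj_smul_le_centralizer_of_minimal hG hW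
      (fun X hX hXc hX0 => hmin X ⟨hX, hXc, hX0⟩) hN
    exact le_bot_iff.mp (le_normalClosure.trans
      (hG _ normalClosure_normal (isMulCommutative_normalClosure hconj)).le)

theorem stmt_17 {G : Type*} [Group G] [Finite G]
    (hG : ∀ N : Subgroup G, N.Normal → IsMulCommutative N → N = ⊥)
    (H : Subgroup G) (hH : IsCDSubgroup H) :
    H ⊓ Subgroup.centralizer (H : Set G) = ⊥ ∧ H.Normal ∧
      (Subgroup.centralizer (H : Set G)).Normal ∧
      (H : Set G) * (Subgroup.centralizer (H : Set G) : Set G) = Set.univ := by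
  have hmax : IsCDMax H := hH.isCDMax
  have hbot : H ⊓ centralizer (H : Set G) = ⊥ :=
    eq_bot_of_isCDMax_of_isMulCommutative hG (isCDMax_inf_centralizer hmax)
  have hnormal : H.Normal := normal_of_isCDMax_of_inf_centralizer_eq_bot hG hmax hbot
  exact ⟨hbot, hnormal, inferInstance, mul_centralizer_eq_univ hG hmax hbot⟩
end

section
/- Let p be a prime and let G be a non-abelian finite p-group whose maximal CD-subgroup M(G) is a proper subgroup of G and in which the minimal index of a normal abelian subgroup equals μ(G)/p. Then M(G) has index p in G and M(G) is an abelian maximal subgroup of G. -/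
open Pointwise

/-!
Being the largest CD-subgroup, `M` is characteristic. Since `C_G(C_G(M)) ≥ M`, the centralizer
`C = C_G(M)` satisfies `m(G,C) ≤ m(G,M)`, so it is a CD-subgroup as well; hence `C ≤ M` and `C`
is a normal abelian subgroup. As `p` divides `|G:M|`, the chain
`μ(G) = |G:M| |G:C| ≥ p |G:C| ≥ p (μ(G)/p) = μ(G)` forces `|G:M| = p` and `|G:C| = μ(G)/p`.
If `M` were not abelian, `M/C` would be a nontrivial normal subgroup of the `p`-group `G/C`, so it
would contain a central element `bC ≠ 1`; then `⟨b⟩C` is a normal abelian subgroup properly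
containing `C`, of index below `μ(G)/p`.
-/

open Subgroup

section CDSubgroup

variable {G : Type*} [Group G]

lemma cdMu_le_cdMeasure (H : Subgroup G) : cdMu G ≤ cdMeasure H :=
  Nat.sInf_le ⟨H, rfl⟩

lemma centralizer_comap_mulEquiv (e : G ≃* G) (H : Subgroup G) :
    centralizer (H.comap e.toMonoidHom : Set G) =
      (centralizer (H : Set G)).comap e.toMonoidHom := by
  ext x
  simp only [mem_comap, mem_centralizer_iff, SetLike.mem_coe, MulEquiv.coe_toMonoidHom]
  refine ⟨fun h y hy => ?_, fun h y hy => e.injective (by simpa using h (e y) hy)⟩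
  simpa using congrArg e (h (e.symm y) (by simpa using hy))

lemma cdMeasure_comap_mulEquiv (e : G ≃* G) (H : Subgroup G) :
    cdMeasure (H.comap e.toMonoidHom) = cdMeasure H := by
  rw [cdMeasure, cdMeasure, centralizer_comap_mulEquiv, index_comap_of_surjective _ e.surjective,
    index_comap_of_surjective _ e.surjective]

lemma IsCDSubgroup.comap_mulEquiv {H : Subgroup G} (hH : IsCDSubgroup H) (e : G ≃* G) :
    IsCDSubgroup (H.comap e.toMonoidHom) :=
  (cdMeasure_comap_mulEquiv e H).trans hH

lemma characteristic_of_forall_isCDSubgroup_le {M : Subgroup G} (hM : IsCDSubgroup M)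
    (hMmax : ∀ H : Subgroup G, IsCDSubgroup H → H ≤ M) : M.Characteristic :=
  characteristic_iff_comap_le.mpr fun e => hMmax _ (hM.comap_mulEquiv e)

lemma IsCDSubgroup.centralizer [Finite G] {H : Subgroup G} (hH : IsCDSubgroup H) :
    IsCDSubgroup (Subgroup.centralizer (H : Set G)) := by
  refine le_antisymm ?_ (cdMu_le_cdMeasure _)
  calc cdMeasure (Subgroup.centralizer (H : Set G))
      ≤ (Subgroup.centralizer (H : Set G)).index * H.index :=
        Nat.mul_le_mul_left _ (index_antitone (le_centralizer_iff.mp le_rfl))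
    _ = cdMu G := (mul_comm _ _).trans hH

end CDSubgroup

lemma Subgroup.normal_zpowers_of_mem_center {G : Type*} [Group G] {x : G} (hx : x ∈ center G) :
    (zpowers x).Normal :=
  ⟨fun n hn g => by rwa [mem_center_iff.mp (zpowers_le.mpr hx hn) g, mul_inv_cancel_right]⟩

namespace IsPGroup

variable {p : ℕ} [Fact p.Prime] {G : Type*} [Group G] [Finite G] (hG : IsPGroup p G)
include hG

lemma dvd_index_of_ne_top {H : Subgroup G} (hH : H ≠ ⊤) : p ∣ H.index := by
  obtain ⟨n, hn⟩ := hG.index H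
  rcases n with _ | n
  · exact absurd (index_eq_one.mp hn) hH
  · exact hn ▸ dvd_pow_self p n.succ_ne_zero

lemma exists_ne_one_mem_center_of_normal {N : Subgroup G} [N.Normal] (hN : N ≠ ⊥) :
    ∃ x ∈ N, x ∈ center G ∧ x ≠ 1 := by
  have : Nontrivial N := (nontrivial_iff_ne_bot N).mpr hN
  obtain ⟨n, hn0, hn⟩ := (hG.to_subgroup N).nontrivial_iff_card.mp inferInstance
  have hfix_one : (1 : N) ∈ MulAction.fixedPoints (ConjAct G) N := fun g => by
    ext; simp
  obtain ⟨b, hb, hb1⟩ :=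
    (hG.of_equiv ConjAct.toConjAct).exists_fixed_point_of_prime_dvd_card_of_fixed_point N
      (hn ▸ dvd_pow_self p hn0.ne') hfix_one
  refine ⟨b, b.2, ?_, fun h => hb1 (Subtype.ext h.symm)⟩
  rw [← SetLike.mem_coe, ← ConjAct.fixedPoints_eq_center]
  exact fun g => by simpa [ConjAct.Subgroup.val_conj_smul] using congrArg Subtype.val (hb g)

lemma exists_normal_isMulCommutative_gt {A M : Subgroup G} [A.Normal] [M.Normal]
    [IsMulCommutative A] (hMA : ¬M ≤ A) (hM : M ≤ centralizer (A : Set G)) :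
    ∃ B : Subgroup G, B.Normal ∧ IsMulCommutative B ∧ A < B := by
  have : (M.map (QuotientGroup.mk' A)).Normal := .map ‹_› _ (QuotientGroup.mk'_surjective A)
  obtain ⟨-, ⟨b, hbM, rfl⟩, hbZ, hb1⟩ :=
    (hG.to_quotient A).exists_ne_one_mem_center_of_normal (N := M.map (QuotientGroup.mk' A))
      (by rwa [Ne, Subgroup.map_eq_bot_iff, QuotientGroup.ker_mk'])
  have hB : (zpowers (QuotientGroup.mk' A b)).comap (QuotientGroup.mk' A) = zpowers b ⊔ A := by
    rw [← MonoidHom.map_zpowers, comap_map_eq, QuotientGroup.ker_mk']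
  refine ⟨zpowers b ⊔ A, hB ▸ (normal_zpowers_of_mem_center hbZ).comap _, ?_,
    SetLike.lt_iff_le_and_exists.mpr ⟨le_sup_right, b, mem_sup_left (mem_zpowers b),
      fun h => hb1 ((QuotientGroup.eq_one_iff b).mpr h)⟩⟩
  rw [← closure_eq A, zpowers_eq_closure, ← Subgroup.closure_union]
  refine isMulCommutative_closure ?_
  rintro x (rfl | hx) y (rfl | hy)
  · rfl
  · exact (hM hbM y hy).symm
  · exact hM hbM x hx
  · exact setLike_mul_comm hx hy

end IsPGroup

lemma Nat.eq_of_dvd_of_mul_div_le {a c p : ℕ} (ha : a ≠ 0) (hc : c ≠ 0) (hpa : p ∣ a)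
    (h : a * c / p ≤ c) : a = p := by
  obtain ⟨q, rfl⟩ := hpa
  rw [mul_assoc, Nat.mul_div_cancel_left _ (Nat.pos_of_ne_zero (left_ne_zero_of_mul ha))] at h
  have hq : q = 1 :=
    le_antisymm (Nat.le_of_mul_le_mul_right (by rwa [one_mul]) (Nat.pos_of_ne_zero hc))
      (Nat.pos_of_ne_zero (right_ne_zero_of_mul ha))
  rw [hq, mul_one]

theorem stmt_19_general {G : Type*} [Group G] [Finite G] (p : ℕ) (hp : p.Prime)
    (hpG : IsPGroup p G)
    (M : Subgroup G) (hM : IsCDSubgroup M)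
    (hMmax : ∀ H : Subgroup G, IsCDSubgroup H → H ≤ M) (hMne : M ≠ ⊤)
    (hmin : sInf {n : ℕ | ∃ N : Subgroup G, N.Normal ∧ IsMulCommutative N ∧ N.index = n} =
      cdMu G / p) :
    M.index = p ∧ IsMulCommutative M := by
  have := Fact.mk hp
  have := characteristic_of_forall_isCDSubgroup_le hM hMmax
  set C := centralizer (M : Set G)
  have hCM : C ≤ M := hMmax C hM.centralizer
  have : IsMulCommutative C := le_centralizer_iff_isMulCommutative.mp (centralizer_le hCM)
  have hμ : M.index * C.index = cdMu G := hM
  have hk : ∀ N : Subgroup G, N.Normal → IsMulCommutative N → cdMu G / p ≤ N.index :=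
    fun N hN hNc => hmin ▸ Nat.sInf_le ⟨N, hN, hNc, rfl⟩
  have hMp : M.index = p :=
    Nat.eq_of_dvd_of_mul_div_le index_ne_zero_of_finite index_ne_zero_of_finite
      (hpG.dvd_index_of_ne_top hMne) (hμ ▸ hk C inferInstance inferInstance)
  have hCk : C.index = cdMu G / p := by rw [← hμ, hMp, Nat.mul_div_cancel_left _ hp.pos]
  refine ⟨hMp, le_centralizer_iff_isMulCommutative.mp ?_⟩
  by_contra hMC
  obtain ⟨B, hBn, hBc, hCB⟩ :=
    hpG.exists_normal_isMulCommutative_gt hMC (le_centralizer_iff.mp le_rfl)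
  exact (index_strictAnti hCB).not_ge (hCk ▸ hk B hBn hBc)

theorem stmt_19 {G : Type*} [Group G] [Finite G] (p : ℕ) (hp : p.Prime)
    (hpG : IsPGroup p G) (hnonab : ¬ ∀ a b : G, a * b = b * a)
    (M : Subgroup G) (hM : IsCDSubgroup M)
    (hMmax : ∀ H : Subgroup G, IsCDSubgroup H → H ≤ M) (hMne : M ≠ ⊤)
    (hmin : sInf {n : ℕ | ∃ N : Subgroup G, N.Normal ∧ IsMulCommutative N ∧ N.index = n} =
      cdMu G / p) :
    M.index = p ∧ IsMulCommutative M :=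
  stmt_19_general p hp hpG M hM hMmax hMne hmin
end
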